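/- arXiv:1606.09126 — 3 statements merged into one kernel-verified Lean document; each statement's English description precedes it below -/
import Mathlib

section
/- Let (M_n)_{n≥1} be a sequence of d×d doubly-stochastic real matrices. Assume there exists a constant γ > 0 such that for every n ≥ 1 and every i in {1,…,d}, M_n(i,i) ≥ γ. Then the sequence of backward products P_n = M_n⋯M_2M_1 has finite variation (i.e. Σ_n ‖P_{n+1} − P_n‖ < ∞), hence converges to some row-stochastic matrix L; moreover, for every pair of indices i, j such that the i-th and j-th rows of L are different, the series Σ_n M_n(i,j) and Σ_n M_n(j,i) converge. -/
/-!
For a doubly stochastic `A` with diagonal entries `≥ γ` and a vector `x`, the spread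
`∑ p q, |x q - x p|` drops under `x ↦ A x` by at least `γ ∑ p q, A p q * |x q - x p|`:
`(A x) i - (A x) j` is an average of the `x p - x q` with weights `A i p * A j q`, the column sums
make the total of these bounds over all `i, j` exactly the spread of `x`, and the bounds with
`i = j` are wasted on `|(A x) i - (A x) i| = 0` while containing the diagonal weight `A i i`.
Summed over the columns of `P n = backProd M n`, this is a nonnegative Lyapunov function whose
decrements dominate `γ` times both `∑ |P (n+1) - P n|` and `M n i j * ∑ c, |P n j c - P n i c|`;
the last factor tends to a positive limit when rows `i` and `j` of the limit differ.
-/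

open Filter Topology

/-- Backward products: `backProd M 0 = 1` and `backProd M (n+1) = M n * backProd M n`,
so `backProd M n = M (n-1) * ⋯ * M 0` (the sequence `(M k)_{k≥0}` plays the role of
`(M_n)_{n≥1}` in the paper). -/
noncomputable def backProd {d : ℕ} (M : ℕ → Matrix (Fin d) (Fin d) ℝ) :
    ℕ → Matrix (Fin d) (Fin d) ℝ
  | 0 => 1
  | n + 1 => M n * backProd M n

open Finset Matrix

section Spread

variable {ι : Type*} [Fintype ι] {M : Matrix ι ι ℝ}

def spread (x : ι → ℝ) : ℝ := ∑ p, ∑ q, |x q - x p|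

def weightedSpread (M : Matrix ι ι ℝ) (x : ι → ℝ) : ℝ := ∑ p, ∑ q, M p q * |x q - x p|

lemma spread_nonneg (x : ι → ℝ) : 0 ≤ spread x :=
  sum_nonneg fun _ _ => sum_nonneg fun _ _ => abs_nonneg _

lemma weightedSpread_nonneg (hM : ∀ i j, 0 ≤ M i j) (x : ι → ℝ) : 0 ≤ weightedSpread M x :=
  sum_nonneg fun p _ => sum_nonneg fun q _ => mul_nonneg (hM p q) (abs_nonneg _)

lemma mul_abs_sub_le_weightedSpread (hM : ∀ i j, 0 ≤ M i j) (x : ι → ℝ)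
    (i j : ι) : M i j * |x j - x i| ≤ weightedSpread M x := by
  have hterm : ∀ p q, 0 ≤ M p q * |x q - x p| := fun p q => mul_nonneg (hM p q) (abs_nonneg _)
  calc M i j * |x j - x i| ≤ ∑ q, M i q * |x q - x i| :=
        single_le_sum (f := fun q => M i q * |x q - x i|) (fun q _ => hterm i q) (mem_univ j)
    _ ≤ weightedSpread M x :=
        single_le_sum (f := fun p => ∑ q, M p q * |x q - x p|)
          (fun p _ => sum_nonneg fun q _ => hterm p q) (mem_univ i)

lemma mul_sum_mul_abs_sub_le_of_le_diag (hM : ∀ i j, 0 ≤ M i j) {γ : ℝ} (hdiag : ∀ i, γ ≤ M i i)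
    (x : ι → ℝ) (i : ι) :
    γ * ∑ q, M i q * |x q - x i| ≤ ∑ p, M i p * ∑ q, M i q * |x q - x p| := by
  have hrow : ∀ p, 0 ≤ ∑ q, M i q * |x q - x p| := fun p =>
    sum_nonneg fun q _ => mul_nonneg (hM i q) (abs_nonneg _)
  calc γ * ∑ q, M i q * |x q - x i| ≤ M i i * ∑ q, M i q * |x q - x i| :=
        mul_le_mul_of_nonneg_right (hdiag i) (hrow i)
    _ ≤ ∑ p, M i p * ∑ q, M i q * |x q - x p| :=
        single_le_sum (f := fun p => M i p * ∑ q, M i q * |x q - x p|)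
          (fun p _ => mul_nonneg (hM i p) (hrow p)) (mem_univ i)

variable [DecidableEq ι]

lemma abs_mulVec_sub_le (hM : M ∈ rowStochastic ℝ ι) (x : ι → ℝ) (a : ℝ) (i : ι) :
    |(M *ᵥ x) i - a| ≤ ∑ q, M i q * |x q - a| := by
  have h : (M *ᵥ x) i - a = ∑ q, M i q * (x q - a) := by
    simp only [mul_sub, sum_sub_distrib, ← sum_mul, sum_row_of_mem_rowStochastic hM, one_mul]
    rfl
  rw [h]
  refine (abs_sum_le_sum_abs _ _).trans_eq (sum_congr rfl fun q _ => ?_)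
  rw [abs_mul, abs_of_nonneg (nonneg_of_mem_rowStochastic hM)]

lemma sum_abs_mulVec_sub_le_weightedSpread (hM : M ∈ rowStochastic ℝ ι) (x : ι → ℝ) :
    ∑ p, |(M *ᵥ x) p - x p| ≤ weightedSpread M x :=
  sum_le_sum fun p _ => abs_mulVec_sub_le hM x (x p) p

lemma abs_mulVec_sub_mulVec_le (hM : M ∈ rowStochastic ℝ ι) (x : ι → ℝ) (i j : ι) :
    |(M *ᵥ x) i - (M *ᵥ x) j| ≤ ∑ p, M i p * ∑ q, M j q * |x q - x p| := by
  refine (abs_mulVec_sub_le hM x _ i).trans (sum_le_sum fun p _ => ?_)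
  refine mul_le_mul_of_nonneg_left ?_ (nonneg_of_mem_rowStochastic hM)
  rw [abs_sub_comm]
  exact abs_mulVec_sub_le hM x (x p) j

lemma sum_abs_mulVec_sub_add_le (hM : M ∈ rowStochastic ℝ ι) (x : ι → ℝ) (i : ι) :
    ∑ j, |(M *ᵥ x) j - (M *ᵥ x) i| + ∑ p, M i p * ∑ q, M i q * |x q - x p| ≤
      ∑ j, ∑ p, M i p * ∑ q, M j q * |x q - x p| := by
  rw [← add_sum_erase univ (fun j => |(M *ᵥ x) j - (M *ᵥ x) i|) (mem_univ i),
    ← add_sum_erase univ (fun j => ∑ p, M i p * ∑ q, M j q * |x q - x p|) (mem_univ i),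
    sub_self, abs_zero, zero_add, add_comm]
  gcongr with j
  rw [abs_sub_comm]
  exact abs_mulVec_sub_mulVec_le hM x i j

lemma sum_sum_sum_mul_sum_eq_spread (hM : M ∈ colStochastic ℝ ι) (x : ι → ℝ) :
    ∑ i, ∑ j, ∑ p, M i p * ∑ q, M j q * |x q - x p| = spread x := by
  calc ∑ i, ∑ j, ∑ p, M i p * ∑ q, M j q * |x q - x p|
      = ∑ j, ∑ i, ∑ p, M i p * ∑ q, M j q * |x q - x p| := sum_comm
    _ = ∑ j, ∑ p, ∑ q, M j q * |x q - x p| := sum_congr rfl fun j _ =>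
        sum_mulVec_of_mem_colStochastic (x := fun p => ∑ q, M j q * |x q - x p|) hM
    _ = ∑ p, ∑ j, ∑ q, M j q * |x q - x p| := sum_comm
    _ = spread x := sum_congr rfl fun p _ =>
        sum_mulVec_of_mem_colStochastic (x := fun q => |x q - x p|) hM

lemma spread_mulVec_add_le (hM : M ∈ doublyStochastic ℝ ι) {γ : ℝ} (hdiag : ∀ i, γ ≤ M i i)
    (x : ι → ℝ) : spread (M *ᵥ x) + γ * weightedSpread M x ≤ spread x := by
  rw [mem_doublyStochastic_iff_mem_rowStochastic_and_mem_colStochastic] at hM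
  calc spread (M *ᵥ x) + γ * weightedSpread M x
      = ∑ i, (∑ j, |(M *ᵥ x) j - (M *ᵥ x) i| + γ * ∑ q, M i q * |x q - x i|) := by
        rw [spread, weightedSpread, mul_sum, sum_add_distrib]
    _ ≤ ∑ i, (∑ j, |(M *ᵥ x) j - (M *ᵥ x) i| + ∑ p, M i p * ∑ q, M i q * |x q - x p|) := by
        gcongr with i
        exact mul_sum_mul_abs_sub_le_of_le_diag (mem_rowStochastic.1 hM.1).1 hdiag x i
    _ ≤ ∑ i, ∑ j, ∑ p, M i p * ∑ q, M j q * |x q - x p| :=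
        sum_le_sum fun i _ => sum_abs_mulVec_sub_add_le hM.1 x i
    _ = spread x := sum_sum_sum_mul_sum_eq_spread hM.2 x

end Spread

section Columns

variable {ι κ : Type*} [Fintype ι] [Fintype κ] {A : Matrix ι ι ℝ}

def columnSpread (P : Matrix ι κ ℝ) : ℝ := ∑ c, spread (Pᵀ c)

lemma mul_sum_abs_sub_le_sum_weightedSpread (hA : ∀ i j, 0 ≤ A i j) (P : Matrix ι κ ℝ)
    (i j : ι) : A i j * ∑ c, |P j c - P i c| ≤ ∑ c, weightedSpread A (Pᵀ c) := by
  rw [mul_sum]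
  exact sum_le_sum fun c _ => mul_abs_sub_le_weightedSpread hA (Pᵀ c) i j

variable [DecidableEq ι]

lemma columnSpread_mul_add_le (hA : A ∈ doublyStochastic ℝ ι) {γ : ℝ} (hdiag : ∀ i, γ ≤ A i i)
    (P : Matrix ι κ ℝ) :
    columnSpread (A * P) + γ * ∑ c, weightedSpread A (Pᵀ c) ≤ columnSpread P := by
  rw [columnSpread, columnSpread, mul_sum, ← sum_add_distrib]
  exact sum_le_sum fun c _ => spread_mulVec_add_le hA hdiag (Pᵀ c)

lemma sum_abs_mul_sub_le_sum_weightedSpread (hA : A ∈ rowStochastic ℝ ι) (P : Matrix ι κ ℝ) :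
    ∑ i, ∑ c, |(A * P) i c - P i c| ≤ ∑ c, weightedSpread A (Pᵀ c) := by
  rw [sum_comm]
  exact sum_le_sum fun c _ => sum_abs_mulVec_sub_le_weightedSpread hA (Pᵀ c)

lemma isClosed_rowStochastic : IsClosed (rowStochastic ℝ ι : Set (Matrix ι ι ℝ)) := by
  have hnonneg : IsClosed {M : Matrix ι ι ℝ | ∀ i j, 0 ≤ M i j} := by
    simp only [Set.ofPred_forall]
    exact isClosed_iInter fun i => isClosed_iInter fun j =>
      isClosed_le continuous_const ((continuous_apply j).comp (continuous_apply i))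
  exact hnonneg.inter (isClosed_eq (continuous_id.matrix_mulVec continuous_const) continuous_const)

end Columns

lemma summable_of_add_mul_le {W u : ℕ → ℝ} {γ : ℝ} (hγ : 0 < γ) (hW : ∀ n, 0 ≤ W n)
    (hu : ∀ n, 0 ≤ u n) (h : ∀ n, W (n + 1) + γ * u n ≤ W n) : Summable u := by
  refine summable_of_sum_range_le (c := W 0 / γ) hu fun N => ?_
  rw [le_div_iff₀ hγ, sum_mul]
  have htel : ∑ n ∈ range N, (W n - W (n + 1)) = W 0 - W N := sum_range_sub' W N
  have hstep : ∑ n ∈ range N, u n * γ ≤ ∑ n ∈ range N, (W n - W (n + 1)) :=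
    sum_le_sum fun n _ => by linarith [h n]
  linarith [hW N]

lemma exists_tendsto_of_summable_sum_abs_sub {ι κ : Type*} [Fintype ι] [Fintype κ]
    {u : ℕ → Matrix ι κ ℝ} (h : Summable fun n => ∑ i, ∑ j, |u (n + 1) i j - u n i j|) :
    ∃ L, Tendsto u atTop (𝓝 L) := by
  have hentry : ∀ i j, ∃ l, Tendsto (fun n => u n i j) atTop (𝓝 l) := by
    intro i j
    refine cauchySeq_tendsto_of_complete (cauchySeq_of_summable_dist ?_)
    refine h.of_nonneg_of_le (fun n => dist_nonneg) fun n => ?_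
    rw [Real.dist_eq, abs_sub_comm]
    exact (single_le_sum (f := fun j => |u (n + 1) i j - u n i j|) (fun _ _ => abs_nonneg _)
      (mem_univ j)).trans (single_le_sum (f := fun i => ∑ j, |u (n + 1) i j - u n i j|)
        (fun _ _ => sum_nonneg fun _ _ => abs_nonneg _) (mem_univ i))
  choose L hL using hentry
  exact ⟨Matrix.of L, tendsto_pi_nhds.2 fun i => tendsto_pi_nhds.2 (hL i)⟩

lemma summable_of_mul_le_of_tendsto_pos {a s b : ℕ → ℝ} {δ : ℝ} (hδ : 0 < δ)
    (hs : Tendsto s atTop (𝓝 δ)) (ha : ∀ n, 0 ≤ a n) (hb : Summable b)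
    (h : ∀ n, a n * s n ≤ b n) : Summable a := by
  refine Summable.of_norm_bounded_eventually_nat (hb.mul_left (2 / δ)) ?_
  filter_upwards [hs.eventually (eventually_gt_nhds (half_lt_self hδ))] with n hn
  rw [Real.norm_of_nonneg (ha n), div_mul_eq_mul_div, le_div_iff₀ hδ]
  nlinarith [h n, ha n]

section BackwardProducts

variable {d : ℕ} {M : ℕ → Matrix (Fin d) (Fin d) ℝ}

lemma backProd_mem {S : Submonoid (Matrix (Fin d) (Fin d) ℝ)} (hM : ∀ n, M n ∈ S) (n : ℕ) :
    backProd M n ∈ S := by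
  induction n with
  | zero => exact S.one_mem
  | succ n ih => exact S.mul_mem (hM n) ih

lemma summable_sum_weightedSpread_backProd {γ : ℝ} (hγ : 0 < γ)
    (hM : ∀ n, M n ∈ doublyStochastic ℝ (Fin d)) (hdiag : ∀ n i, γ ≤ M n i i) :
    Summable fun n => ∑ c, weightedSpread (M n) ((backProd M n)ᵀ c) :=
  summable_of_add_mul_le hγ (W := fun n => columnSpread (backProd M n))
    (fun _ => sum_nonneg fun _ _ => spread_nonneg _)
    (fun n => sum_nonneg fun _ _ => weightedSpread_nonneg (mem_doublyStochastic.1 (hM n)).1 _)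
    fun n => columnSpread_mul_add_le (hM n) (hdiag n) (backProd M n)

lemma summable_of_tendsto_backProd_of_row_ne {γ : ℝ} (hγ : 0 < γ)
    (hM : ∀ n, M n ∈ doublyStochastic ℝ (Fin d)) (hdiag : ∀ n i, γ ≤ M n i i)
    {L : Matrix (Fin d) (Fin d) ℝ} (hL : Tendsto (backProd M) atTop (𝓝 L)) {i j : Fin d}
    (hij : L i ≠ L j) : Summable fun n => M n i j := by
  have hδ : 0 < ∑ c, |L j c - L i c| := by
    obtain ⟨c, hc⟩ := Function.ne_iff.1 hij
    exact sum_pos' (fun _ _ => abs_nonneg _) ⟨c, mem_univ c, abs_pos.2 (sub_ne_zero.2 hc.symm)⟩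
  have hentry : ∀ k c, Tendsto (fun n => backProd M n k c) atTop (𝓝 (L k c)) := fun k =>
    tendsto_pi_nhds.1 (tendsto_pi_nhds.1 hL k)
  have hnonneg : ∀ n, ∀ i j, 0 ≤ M n i j := fun n => (mem_doublyStochastic.1 (hM n)).1
  exact summable_of_mul_le_of_tendsto_pos hδ
    (tendsto_finsetSum _ fun c _ => ((hentry j c).sub (hentry i c)).abs)
    (fun n => hnonneg n i j) (summable_sum_weightedSpread_backProd hγ hM hdiag)
    fun n => mul_sum_abs_sub_le_sum_weightedSpread (hnonneg n) (backProd M n) i j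

end BackwardProducts

/-- For a sequence of `d × d` doubly-stochastic matrices with diagonal
entries bounded below by `γ > 0`, the backward products have finite variation, hence
converge to a row-stochastic matrix `L`; moreover the series `Σ_n M_n(i,j)` and
`Σ_n M_n(j,i)` converge whenever rows `i` and `j` of `L` are different. -/
theorem backProd_finite_variation_of_doubly_stochastic
    (d : ℕ) (M : ℕ → Matrix (Fin d) (Fin d) ℝ) (γ : ℝ)
    (hγ : 0 < γ)
    (hnonneg : ∀ n i j, 0 ≤ M n i j)
    (hrow : ∀ n i, ∑ j, M n i j = 1)
    (hcol : ∀ n j, ∑ i, M n i j = 1)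
    (hdiag : ∀ n i, γ ≤ M n i i) :
    (Summable fun n => ∑ i, ∑ j, |backProd M (n + 1) i j - backProd M n i j|) ∧
    ∃ L : Matrix (Fin d) (Fin d) ℝ,
      (∀ i j, 0 ≤ L i j) ∧ (∀ i, ∑ j, L i j = 1) ∧
      Tendsto (backProd M) atTop (nhds L) ∧
      ∀ i j, L i ≠ L j → Summable (fun n => M n i j) ∧ Summable (fun n => M n j i) := by
  have hM : ∀ n, M n ∈ doublyStochastic ℝ (Fin d) := fun n =>
    mem_doublyStochastic_iff_sum.2 ⟨hnonneg n, hrow n, hcol n⟩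
  have hMrow : ∀ n, M n ∈ rowStochastic ℝ (Fin d) := fun n =>
    mem_rowStochastic_iff_sum.2 ⟨hnonneg n, hrow n⟩
  have hvar : Summable fun n => ∑ i, ∑ j, |backProd M (n + 1) i j - backProd M n i j| :=
    (summable_sum_weightedSpread_backProd hγ hM hdiag).of_nonneg_of_le (fun _ => by positivity)
      fun n => sum_abs_mul_sub_le_sum_weightedSpread (hMrow n) (backProd M n)
  obtain ⟨L, hL⟩ := exists_tendsto_of_summable_sum_abs_sub hvar
  have hLrow : L ∈ rowStochastic ℝ (Fin d) :=
    isClosed_rowStochastic.mem_of_tendsto hL (Eventually.of_forall (backProd_mem hMrow))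
  exact ⟨hvar, L, fun i j => nonneg_of_mem_rowStochastic hLrow, sum_row_of_mem_rowStochastic hLrow,
    hL, fun i j hij => ⟨summable_of_tendsto_backProd_of_row_ne hγ hM hdiag hL hij,
      summable_of_tendsto_backProd_of_row_ne hγ hM hdiag hL hij.symm⟩⟩
end

section
/- The set Γ(a,b,X_0) is empty if and only if there exist subsets A ⊆ {1,…,p} and B ⊆ {1,…,q} such that X_0(i,j) = 0 for all (i,j) ∈ A×B and a(A) > b(B^c). -/
open Filter Topology

namespace IPFP

variable {p q : ℕ}

/-- Row sums `X(i,+)`. -/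
noncomputable def rowSum (X : Matrix (Fin p) (Fin q) ℝ) (i : Fin p) : ℝ := ∑ j, X i j

/-- Column sums `X(+,j)`. -/
noncomputable def colSum (X : Matrix (Fin p) (Fin q) ℝ) (j : Fin q) : ℝ := ∑ i, X i j

/-- `R_i(X) = X(i,+)/a_i`. -/
noncomputable def Rrat (a : Fin p → ℝ) (X : Matrix (Fin p) (Fin q) ℝ) (i : Fin p) : ℝ :=
  rowSum X i / a i

/-- `C_j(X) = X(+,j)/b_j`. -/
noncomputable def Crat (b : Fin q → ℝ) (X : Matrix (Fin p) (Fin q) ℝ) (j : Fin q) : ℝ :=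
  colSum X j / b j

/-- `T_R(X)(i,j) = X(i,j)/R_i(X)`. -/
noncomputable def TR (a : Fin p → ℝ) (X : Matrix (Fin p) (Fin q) ℝ) :
    Matrix (Fin p) (Fin q) ℝ :=
  fun i j => X i j / Rrat a X i

/-- `T_C(X)(i,j) = X(i,j)/C_j(X)`. -/
noncomputable def TC (b : Fin q → ℝ) (X : Matrix (Fin p) (Fin q) ℝ) :
    Matrix (Fin p) (Fin q) ℝ :=
  fun i j => X i j / Crat b X j

/-- The IPFP sequence: `X_0 = X0`, `X_{2n+1} = T_R(X_{2n})`, `X_{2n+2} = T_C(X_{2n+1})`. -/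
noncomputable def ipfp (a : Fin p → ℝ) (b : Fin q → ℝ) (X0 : Matrix (Fin p) (Fin q) ℝ) :
    ℕ → Matrix (Fin p) (Fin q) ℝ
  | 0 => X0
  | n + 1 => if Even n then TR a (ipfp a b X0 n) else TC b (ipfp a b X0 n)

/-- Membership in `Γ₀`: nonnegative entries, positive row and column sums. -/
def memGamma0 (X : Matrix (Fin p) (Fin q) ℝ) : Prop :=
  (∀ i j, 0 ≤ X i j) ∧ (∀ i, 0 < rowSum X i) ∧ (∀ j, 0 < colSum X j)

/-- Membership in `Γ₁`: member of `Γ₀` with total sum `1`. -/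
def memGamma1 (X : Matrix (Fin p) (Fin q) ℝ) : Prop :=
  memGamma0 X ∧ ∑ i, ∑ j, X i j = 1

/-- Membership in `Γ(a,b)`: member of `Γ₀` with row marginals `a` and column marginals `b`. -/
def memGamma (a : Fin p → ℝ) (b : Fin q → ℝ) (X : Matrix (Fin p) (Fin q) ℝ) : Prop :=
  memGamma0 X ∧ (∀ i, rowSum X i = a i) ∧ (∀ j, colSum X j = b j)

/-- `Supp(X) ⊆ Supp(Y)`. -/
def suppSubset (X Y : Matrix (Fin p) (Fin q) ℝ) : Prop :=
  ∀ i j, 0 < X i j → 0 < Y i j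

/-- Membership in `Γ(a,b,X0)`: member of `Γ(a,b)` with support contained in `Supp(X0)`. -/
def memGammaSub (a : Fin p → ℝ) (b : Fin q → ℝ) (X0 X : Matrix (Fin p) (Fin q) ℝ) : Prop :=
  memGamma a b X ∧ suppSubset X X0

/-- Relative entropy (I-divergence) `D(Y‖X) = Σ_{(i,j) ∈ Supp X} Y(i,j)·ln(Y(i,j)/X(i,j))`
(finite expression; it agrees with the relative entropy whenever `Supp Y ⊆ Supp X`,
with the convention `0·ln 0 = 0`). -/
noncomputable def relEnt (Y X : Matrix (Fin p) (Fin q) ℝ) : ℝ :=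
  ∑ i, ∑ j, if 0 < X i j then Y i j * Real.log (Y i j / X i j) else 0

/-- A real sequence converges to `l` at an at least geometric rate:
it tends to `l` and `limsup_n |x_n − l|^{1/n} < 1`. -/
noncomputable def geomSeq (x : ℕ → ℝ) (l : ℝ) : Prop :=
  Tendsto x atTop (nhds l) ∧
    Filter.limsup (fun n : ℕ => |x n - l| ^ ((n : ℝ)⁻¹)) atTop < 1

/-- A matrix sequence converges to `L` at an at least geometric rate (using the
`ℓ¹` norm on entries): it tends to `L` and `limsup_n ‖X_n − L‖^{1/n} < 1`. -/
noncomputable def geomMat (X : ℕ → Matrix (Fin p) (Fin q) ℝ)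
    (L : Matrix (Fin p) (Fin q) ℝ) : Prop :=
  Tendsto X atTop (nhds L) ∧
    Filter.limsup (fun n : ℕ => (∑ i, ∑ j, |X n i j - L i j|) ^ ((n : ℝ)⁻¹)) atTop < 1

end IPFP

/-! Let `M` maximize the total mass over the compact set of nonnegative matrices supported in
`Supp X₀` whose row and column sums are at most `a` and `b`. If every row of `M` is saturated,
`M ∈ Γ(a,b,X₀)`. Otherwise let `A` (rows) and `Bᶜ` (columns) be what an unsaturated row `i₀`
reaches by alternating paths, row → column along `Supp X₀` and column → row along `Supp M`.
Shifting mass along such a path is a direction in which `M` can move, so if it ended at an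
unsaturated column the total mass would increase; hence every column of `Bᶜ` is saturated. As
`X₀ = 0` on `A × B` and `M = 0` on `Aᶜ × Bᶜ`, this gives `b(Bᶜ) = M(A, Bᶜ) ≤ M(A, +) < a(A)`.
The converse is the count `a(A) = S(A, Bᶜ) ≤ b(Bᶜ)` for any `S ∈ Γ(a,b,X₀)`. -/

namespace IPFP

open Finset
open scoped Matrix

variable {p q : ℕ}

lemma rowSum_add (X Y : Matrix (Fin p) (Fin q) ℝ) (i : Fin p) :
    rowSum (X + Y) i = rowSum X i + rowSum Y i :=
  sum_add_distrib

lemma colSum_add (X Y : Matrix (Fin p) (Fin q) ℝ) (j : Fin q) :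
    colSum (X + Y) j = colSum X j + colSum Y j :=
  sum_add_distrib

lemma rowSum_smul (t : ℝ) (X : Matrix (Fin p) (Fin q) ℝ) (i : Fin p) :
    rowSum (t • X) i = t * rowSum X i :=
  (mul_sum ..).symm

lemma colSum_smul (t : ℝ) (X : Matrix (Fin p) (Fin q) ℝ) (j : Fin q) :
    colSum (t • X) j = t * colSum X j :=
  (mul_sum ..).symm

lemma rowSum_single (i : Fin p) (j : Fin q) (c : ℝ) :
    rowSum (Matrix.single i j c) = Pi.single i c := by
  ext k
  by_cases hk : k = i
  · subst hk; simp [rowSum, Matrix.single_apply]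
  · simp [rowSum, hk, Ne.symm hk]

lemma colSum_single (i : Fin p) (j : Fin q) (c : ℝ) :
    colSum (Matrix.single i j c) = Pi.single j c := by
  ext l
  by_cases hl : l = j
  · subst hl; simp [colSum, Matrix.single_apply]
  · simp [colSum, hl, Ne.symm hl]

lemma sum_colSum_eq_sum_rowSum (X : Matrix (Fin p) (Fin q) ℝ) :
    ∑ j, colSum X j = ∑ i, rowSum X i :=
  sum_comm

lemma sum_rowSum_le_sum_colSum_compl {X : Matrix (Fin p) (Fin q) ℝ} (hX : ∀ i j, 0 ≤ X i j)
    {A : Finset (Fin p)} {B : Finset (Fin q)} (hAB : ∀ i ∈ A, ∀ j ∈ B, X i j = 0) :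
    ∑ i ∈ A, rowSum X i ≤ ∑ j ∈ Bᶜ, colSum X j :=
  calc ∑ i ∈ A, rowSum X i = ∑ i ∈ A, ∑ j ∈ Bᶜ, X i j := by
        refine sum_congr rfl fun i hi => (sum_subset (subset_univ _) fun j _ hj => ?_).symm
        exact hAB i hi j (by simpa using hj)
    _ = ∑ j ∈ Bᶜ, ∑ i ∈ A, X i j := sum_comm
    _ ≤ ∑ j ∈ Bᶜ, colSum X j :=
        sum_le_sum fun j _ => sum_le_sum_of_subset_of_nonneg (subset_univ _) fun i _ _ => hX i j

lemma eventually_add_mul_le {x c d : ℝ} (hx : x ≤ c) (hd : x = c → d ≤ 0) :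
    ∀ᶠ t in 𝓝[>] (0 : ℝ), x + t * d ≤ c := by
  rcases hx.lt_or_eq with hlt | heq
  · have : Tendsto (fun t : ℝ => x + t * d) (𝓝 0) (𝓝 x) := by
      simpa using (tendsto_id (x := 𝓝 (0 : ℝ))).mul_const d |>.const_add x
    exact nhdsWithin_le_nhds ((this.eventually_lt_const hlt).mono fun _ => le_of_lt)
  · filter_upwards [self_mem_nhdsWithin] with t (ht : 0 < t)
    nlinarith [hd heq]

section Flow

variable (a : Fin p → ℝ) (b : Fin q → ℝ) (X0 : Matrix (Fin p) (Fin q) ℝ)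

def subCouplings : Set (Matrix (Fin p) (Fin q) ℝ) :=
  {M | (∀ i j, 0 ≤ M i j) ∧ (∀ i j, X0 i j = 0 → M i j = 0) ∧
    (∀ i, rowSum M i ≤ a i) ∧ (∀ j, colSum M j ≤ b j)}

lemma isCompact_subCouplings : IsCompact (subCouplings a b X0) := by
  have hbox : IsCompact
      (Set.univ.pi fun i : Fin p => Set.univ.pi fun _ : Fin q => Set.Icc 0 (a i)) :=
    isCompact_univ_pi fun _ => isCompact_univ_pi fun _ => isCompact_Icc
  refine hbox.of_isClosed_subset ?_ ?_
  · simp only [subCouplings, Set.ofPred_and, Set.ofPred_forall]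
    refine .inter ?_ (.inter ?_ (.inter ?_ ?_)) <;>
      refine isClosed_iInter fun i => ?_
    · exact isClosed_iInter fun j => isClosed_le continuous_const (by fun_prop)
    · exact isClosed_iInter fun j => isClosed_iInter fun _ =>
        isClosed_eq (by fun_prop) continuous_const
    · exact isClosed_le (by unfold rowSum; fun_prop) continuous_const
    · exact isClosed_le (by unfold colSum; fun_prop) continuous_const
  · rintro M ⟨hM0, -, hrow, -⟩ i - j -
    exact ⟨hM0 i j, (single_le_sum (fun j _ => hM0 i j) (mem_univ j)).trans (hrow i)⟩

lemma exists_isMaxOn_sum_rowSum (ha : ∀ i, 0 ≤ a i) (hb : ∀ j, 0 ≤ b j) :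
    ∃ M ∈ subCouplings a b X0, IsMaxOn (fun M => ∑ i, rowSum M i) (subCouplings a b X0) M := by
  refine (isCompact_subCouplings a b X0).exists_isMaxOn ⟨0, ?_⟩ (by unfold rowSum; fun_prop)
  exact ⟨fun _ _ => le_rfl, fun _ _ _ => rfl, fun i => by simpa [rowSum] using ha i,
    fun j => by simpa [colSum] using hb j⟩

variable {a b X0} in
lemma memGammaSub_of_rowSum_eq (hX0 : ∀ i j, 0 ≤ X0 i j) (ha : ∀ i, 0 < a i)
    (hb : ∀ j, 0 < b j) (hab : ∑ i, a i = ∑ j, b j) {M : Matrix (Fin p) (Fin q) ℝ}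
    (hM : M ∈ subCouplings a b X0) (hrow : ∀ i, rowSum M i = a i) : memGammaSub a b X0 M := by
  obtain ⟨hM0, hMX0, -, hMcol⟩ := hM
  have hcol : ∀ j, colSum M j = b j := by
    have htot : ∑ j, colSum M j = ∑ j, b j := by
      rw [sum_colSum_eq_sum_rowSum, ← hab]
      exact sum_congr rfl fun i _ => hrow i
    exact fun j => (sum_eq_sum_iff_of_le fun j _ => hMcol j).mp htot j (mem_univ j)
  refine ⟨⟨⟨hM0, fun i => hrow i ▸ ha i, fun j => hcol j ▸ hb j⟩, hrow, hcol⟩, fun i j hMij => ?_⟩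
  exact (hX0 i j).lt_of_ne fun h => hMij.ne' (hMX0 i j h.symm)

variable (M : Matrix (Fin p) (Fin q) ℝ)

/-- `M + t • D` stays in `subCouplings a b X0` for small `t > 0`, except that the sums of the
rows and columns saturated by `M` may exceed their bounds by `t • r` and `t • c`. -/
structure IsAdmissibleDir (r : Fin p → ℝ) (c : Fin q → ℝ) (D : Matrix (Fin p) (Fin q) ℝ) :
    Prop where
  nonneg_of_eq_zero : ∀ i j, M i j = 0 → 0 ≤ D i j
  eq_zero_of_eq_zero : ∀ i j, X0 i j = 0 → D i j = 0
  rowSum_le : ∀ i, rowSum M i = a i → rowSum D i ≤ r i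
  colSum_le : ∀ j, colSum M j = b j → colSum D j ≤ c j

variable {a b X0 M}

lemma exists_pos_add_smul_mem_subCouplings (hM : M ∈ subCouplings a b X0)
    {D : Matrix (Fin p) (Fin q) ℝ} (hD : IsAdmissibleDir a b X0 M 0 0 D) :
    ∃ t : ℝ, 0 < t ∧ M + t • D ∈ subCouplings a b X0 := by
  obtain ⟨hM0, hMX0, hMrow, hMcol⟩ := hM
  have hev : ∀ᶠ t in 𝓝[>] (0 : ℝ), (∀ i j, 0 ≤ (M + t • D) i j) ∧
      (∀ i, rowSum (M + t • D) i ≤ a i) ∧ (∀ j, colSum (M + t • D) j ≤ b j) := by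
    refine (eventually_all.2 fun i => eventually_all.2 fun j => ?_).and
      ((eventually_all.2 fun i => ?_).and (eventually_all.2 fun j => ?_))
    · filter_upwards [eventually_add_mul_le (neg_nonpos.2 (hM0 i j))
        fun h => neg_nonpos.2 (hD.nonneg_of_eq_zero i j (neg_eq_zero.1 h))] with t ht
      simp only [Matrix.add_apply, Matrix.smul_apply, smul_eq_mul]
      linarith
    · simpa [rowSum_add, rowSum_smul] using eventually_add_mul_le (hMrow i) (hD.rowSum_le i)
    · simpa [colSum_add, colSum_smul] using eventually_add_mul_le (hMcol j) (hD.colSum_le j)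
  obtain ⟨t, ⟨h0, hrow, hcol⟩, ht⟩ := (hev.and self_mem_nhdsWithin).exists
  exact ⟨t, ht, h0, fun i j h => by simp [hMX0 i j h, hD.eq_zero_of_eq_zero i j h], hrow, hcol⟩

lemma IsAdmissibleDir.add_single {r : Fin p → ℝ} {c : Fin q → ℝ} {D : Matrix (Fin p) (Fin q) ℝ}
    (hD : IsAdmissibleDir a b X0 M r c D) {i : Fin p} {j : Fin q} {s : ℝ}
    (hMij : M i j = 0 → 0 ≤ s) (hX0ij : X0 i j = 0 → s = 0) :
    IsAdmissibleDir a b X0 M (r + Pi.single i s) (c + Pi.single j s)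
      (D + Matrix.single i j s) := by
  refine ⟨fun k l hkl => ?_, fun k l hkl => ?_, fun k hk => ?_, fun l hl => ?_⟩
  · by_cases h : i = k ∧ j = l
    · obtain ⟨rfl, rfl⟩ := h
      simpa using add_nonneg (hD.nonneg_of_eq_zero i j hkl) (hMij hkl)
    · simpa [Matrix.single_apply_of_ne _ _ _ _ _ h] using hD.nonneg_of_eq_zero k l hkl
  · by_cases h : i = k ∧ j = l
    · obtain ⟨rfl, rfl⟩ := h
      simp [hD.eq_zero_of_eq_zero i j hkl, hX0ij hkl]
    · simp [Matrix.single_apply_of_ne _ _ _ _ _ h, hD.eq_zero_of_eq_zero k l hkl]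
  · simpa [rowSum_add, rowSum_single] using hD.rowSum_le k hk
  · simpa [colSum_add, colSum_single] using hD.colSum_le l hl

variable (X0 M) in
inductive AltReach (i0 : Fin p) : Fin p ⊕ Fin q → Prop
  | refl : AltReach i0 (.inl i0)
  | row_col {i j} : AltReach i0 (.inl i) → X0 i j ≠ 0 → AltReach i0 (.inr j)
  | col_row {i j} : AltReach i0 (.inr j) → M i j ≠ 0 → AltReach i0 (.inl i)

lemma AltReach.exists_isAdmissibleDir (hM : M ∈ subCouplings a b X0) {i0 : Fin p}
    (hi0 : rowSum M i0 < a i0) {v : Fin p ⊕ Fin q} (hv : AltReach X0 M i0 v) :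
    v.elim
      (fun i => ∃ D, IsAdmissibleDir a b X0 M (-Pi.single i 1) 0 D ∧ ∑ k, rowSum D k = 0)
      (fun j => ∃ D, IsAdmissibleDir a b X0 M 0 (Pi.single j 1) D ∧ ∑ k, rowSum D k = 1) := by
  -- `D` moves one unit of mass along the path: `+1` on each step row → column, `-1` on each
  -- step column → row.
  induction hv with
  | refl =>
    refine ⟨0, ⟨fun _ _ _ => le_rfl, fun _ _ _ => rfl, fun k hk => ?_, fun l _ => ?_⟩, ?_⟩
    · have hki0 : k ≠ i0 := by rintro rfl; exact hi0.ne hk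
      simp [rowSum, hki0]
    all_goals simp [rowSum, colSum]
  | @row_col i j _ hX0ij ih =>
    obtain ⟨D, hD, htot⟩ := ih
    refine ⟨_, by simpa using hD.add_single (fun _ => zero_le_one) fun h => absurd h hX0ij, ?_⟩
    simp [rowSum_add, sum_add_distrib, rowSum_single, htot]
  | @col_row i j _ hMij ih =>
    obtain ⟨D, hD, htot⟩ := ih
    have hD' := hD.add_single (s := -1) (fun h => absurd h hMij)
      (fun h => absurd (hM.2.1 i j h) hMij)
    refine ⟨_, by simpa [Pi.single_neg] using hD', ?_⟩
    simp [rowSum_add, sum_add_distrib, rowSum_single, htot]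

lemma colSum_eq_of_altReach (hM : M ∈ subCouplings a b X0)
    (hmax : IsMaxOn (fun M => ∑ i, rowSum M i) (subCouplings a b X0) M) {i0 : Fin p}
    (hi0 : rowSum M i0 < a i0) {j : Fin q} (hj : AltReach X0 M i0 (.inr j)) :
    colSum M j = b j := by
  by_contra hne
  obtain ⟨D, hD, htot⟩ := hj.exists_isAdmissibleDir hM hi0
  have hD0 : IsAdmissibleDir a b X0 M 0 0 D := { hD with
    colSum_le := fun l hl => by
      have hlj : l ≠ j := by rintro rfl; exact hne hl
      simpa [hlj] using hD.colSum_le l hl }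
  obtain ⟨t, ht, hMt⟩ := exists_pos_add_smul_mem_subCouplings hM hD0
  have := hmax hMt
  simp only [Set.mem_ofPred_eq, rowSum_add, rowSum_smul, sum_add_distrib, ← mul_sum, htot] at this
  linarith

lemma exists_blocking_of_isMaxOn (hM : M ∈ subCouplings a b X0)
    (hmax : IsMaxOn (fun M => ∑ i, rowSum M i) (subCouplings a b X0) M) {i0 : Fin p}
    (hi0 : rowSum M i0 < a i0) :
    ∃ (A : Finset (Fin p)) (B : Finset (Fin q)),
      (∀ i ∈ A, ∀ j ∈ B, X0 i j = 0) ∧ ∑ j ∈ Bᶜ, b j < ∑ i ∈ A, a i := by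
  classical
  let A := univ.filter fun i => AltReach X0 M i0 (.inl i)
  let B := univ.filter fun j => ¬AltReach X0 M i0 (.inr j)
  have hBc : ∀ j ∈ Bᶜ, AltReach X0 M i0 (.inr j) := by simp [B]
  refine ⟨A, B, fun i hi j hj => ?_, ?_⟩
  · simp only [A, B, mem_filter, mem_univ, true_and] at hi hj
    by_contra h
    exact hj (hi.row_col h)
  have hMT : ∀ j ∈ Bᶜ, ∀ i ∈ Aᶜ, Mᵀ j i = 0 := fun j hj i hi => by
    by_contra h
    simp only [A, mem_compl, mem_filter, mem_univ, true_and] at hi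
    exact hi ((hBc j hj).col_row h)
  calc ∑ j ∈ Bᶜ, b j = ∑ j ∈ Bᶜ, rowSum Mᵀ j :=
        sum_congr rfl fun j hj => (colSum_eq_of_altReach hM hmax hi0 (hBc j hj)).symm
    _ ≤ ∑ i ∈ Aᶜᶜ, colSum Mᵀ i := sum_rowSum_le_sum_colSum_compl (fun j i => hM.1 i j) hMT
    _ = ∑ i ∈ A, rowSum M i := by rw [compl_compl]; rfl
    _ < ∑ i ∈ A, a i := sum_lt_sum (fun i _ => hM.2.2.1 i) ⟨i0, by simp [A, AltReach.refl], hi0⟩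

end Flow

end IPFP
open IPFP

theorem gammaSub_empty_iff_general
    (p q : ℕ)
    (a : Fin p → ℝ) (b : Fin q → ℝ)
    (ha : ∀ i, 0 < a i) (hb : ∀ j, 0 < b j)
    (hsa : ∑ i, a i = 1) (hsb : ∑ j, b j = 1)
    (X0 : Matrix (Fin p) (Fin q) ℝ) (hX0 : memGamma0 X0) :
    (¬ ∃ S, memGammaSub a b X0 S) ↔
      ∃ (A : Finset (Fin p)) (B : Finset (Fin q)),
        (∀ i ∈ A, ∀ j ∈ B, X0 i j = 0) ∧ (∑ j ∈ Bᶜ, b j) < ∑ i ∈ A, a i := by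
  constructor
  · intro hempty
    obtain ⟨M, hM, hmax⟩ := exists_isMaxOn_sum_rowSum a b X0 (fun i => (ha i).le) fun j => (hb j).le
    by_cases hrow : ∀ i, rowSum M i = a i
    · exact (hempty ⟨M, memGammaSub_of_rowSum_eq hX0.1 ha hb (hsa.trans hsb.symm) hM hrow⟩).elim
    · push Not at hrow
      obtain ⟨i0, hi0⟩ := hrow
      exact exists_blocking_of_isMaxOn hM hmax ((hM.2.2.1 i0).lt_of_ne hi0)
  · rintro ⟨A, B, hX0AB, hlt⟩ ⟨S, ⟨⟨hS0, -, -⟩, hSrow, hScol⟩, hSX0⟩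
    have hSAB : ∀ i ∈ A, ∀ j ∈ B, S i j = 0 := fun i hi j hj =>
      (hS0 i j).antisymm' (not_lt.1 fun h => (hSX0 i j h).ne' (hX0AB i hi j hj))
    have := sum_rowSum_le_sum_colSum_compl hS0 hSAB
    simp only [hSrow, hScol] at this
    linarith

/-- `Γ(a,b,X_0)` is empty iff there are subsets `A ⊆ {1,…,p}` and
`B ⊆ {1,…,q}` with `X_0 = 0` on `A × B` and `a(A) > b(Bᶜ)`. -/
theorem gammaSub_empty_iff
    (p q : ℕ) (hp : 2 ≤ p) (hq : 2 ≤ q)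
    (a : Fin p → ℝ) (b : Fin q → ℝ)
    (ha : ∀ i, 0 < a i) (hb : ∀ j, 0 < b j)
    (hsa : ∑ i, a i = 1) (hsb : ∑ j, b j = 1)
    (X0 : Matrix (Fin p) (Fin q) ℝ) (hX0 : memGamma0 X0) :
    (¬ ∃ S, memGammaSub a b X0 S) ↔
      ∃ (A : Finset (Fin p)) (B : Finset (Fin q)),
        (∀ i ∈ A, ∀ j ∈ B, X0 i j = 0) ∧ (∑ j ∈ Bᶜ, b j) < ∑ i ∈ A, a i :=
  gammaSub_empty_iff_general p q a b ha hb hsa hsb X0 hX0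
end

section
/- Assume Γ(a,b,X_0) is nonempty. Then there exists a matrix S_0 ∈ Γ(a,b,X_0) such that Supp(S) ⊆ Supp(S_0) for every matrix S ∈ Γ(a,b,X_0). -/
open Filter Topology

open IPFP

/-- Support as a finset. -/
noncomputable def suppF {p q : ℕ} (S : Matrix (Fin p) (Fin q) ℝ) : Finset (Fin p × Fin q) :=
  Finset.univ.filter fun ij => 0 < S ij.1 ij.2

lemma mem_suppF {p q : ℕ} {S : Matrix (Fin p) (Fin q) ℝ} {ij : Fin p × Fin q} :
    ij ∈ suppF S ↔ 0 < S ij.1 ij.2 := by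
  simp [suppF]

lemma avg_mem {p q : ℕ} {a : Fin p → ℝ} {b : Fin q → ℝ}
    {X0 S T : Matrix (Fin p) (Fin q) ℝ}
    (hS : memGammaSub a b X0 S) (hT : memGammaSub a b X0 T) :
    memGammaSub a b X0 (fun i j => (S i j + T i j) / 2) := by
  obtain ⟨⟨⟨hS0, hSr, hSc⟩, hSa, hSb⟩, hSsupp⟩ := hS
  obtain ⟨⟨⟨hT0, hTr, hTc⟩, hTa, hTb⟩, hTsupp⟩ := hT
  have hrow : ∀ i, rowSum (fun i j => (S i j + T i j) / 2) i = a i := by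
    intro i
    have : rowSum (fun i j => (S i j + T i j) / 2) i
        = (rowSum S i + rowSum T i) / 2 := by
      simp only [rowSum]
      rw [← Finset.sum_add_distrib, ← Finset.sum_div]
    rw [this, hSa, hTa]; ring
  have hcol : ∀ j, colSum (fun i j => (S i j + T i j) / 2) j = b j := by
    intro j
    have : colSum (fun i j => (S i j + T i j) / 2) j
        = (colSum S j + colSum T j) / 2 := by
      simp only [colSum]
      rw [← Finset.sum_add_distrib, ← Finset.sum_div]
    rw [this, hSb, hTb]; ring
  refine ⟨⟨⟨fun i j => by have := hS0 i j; have := hT0 i j; linarith, fun i => ?_, fun j => ?_⟩, hrow, hcol⟩, ?_⟩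
  · rw [hrow i, ← hSa i]; exact hSr i
  · rw [hcol j, ← hSb j]; exact hSc j
  · intro i j hpos
    rcases lt_or_ge 0 (S i j) with h | h
    · exact hSsupp i j h
    · have hS' : S i j = 0 := le_antisymm h (hS0 i j)
      have : 0 < T i j := by nlinarith
      exact hTsupp i j this

/-- If `Γ(a,b,X_0)` is nonempty, it contains a matrix `S_0` whose
support contains the support of every matrix in `Γ(a,b,X_0)`. -/
theorem exists_maximal_support
    (p q : ℕ) (hp : 2 ≤ p) (hq : 2 ≤ q)
    (a : Fin p → ℝ) (b : Fin q → ℝ)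
    (ha : ∀ i, 0 < a i) (hb : ∀ j, 0 < b j)
    (hsa : ∑ i, a i = 1) (hsb : ∑ j, b j = 1)
    (X0 : Matrix (Fin p) (Fin q) ℝ) (hX0 : memGamma0 X0)
    (h : ∃ S, memGammaSub a b X0 S) :
    ∃ S0, memGammaSub a b X0 S0 ∧ ∀ S, memGammaSub a b X0 S → suppSubset S S0 := by
  classical
  set A : Set ℕ := {n | ∃ S, memGammaSub a b X0 S ∧ (suppF S).card = n} with hA
  obtain ⟨S, hS⟩ := h
  have hAne : A.Nonempty := ⟨(suppF S).card, S, hS, rfl⟩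
  have hAbdd : BddAbove A := by
    refine ⟨p * q, fun n hn => ?_⟩
    obtain ⟨T, _, rfl⟩ := hn
    calc (suppF T).card ≤ (Finset.univ : Finset (Fin p × Fin q)).card :=
          Finset.card_le_card (Finset.subset_univ _)
      _ = p * q := by simp
  obtain ⟨S0, hS0, hcard⟩ := Nat.sSup_mem hAne hAbdd
  refine ⟨S0, hS0, fun T hT i j hpos => ?_⟩
  set M : Matrix (Fin p) (Fin q) ℝ := fun i j => (T i j + S0 i j) / 2 with hM
  have hMmem : memGammaSub a b X0 M := avg_mem hT hS0
  have hsub : suppF S0 ⊆ suppF M := by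
    intro ij hij
    rw [mem_suppF] at hij ⊢
    have h0 := hT.1.1.1 ij.1 ij.2
    simp only [hM]; positivity
  have hle : (suppF M).card ≤ (suppF S0).card := by
    rw [hcard]; exact le_csSup hAbdd ⟨M, hMmem, rfl⟩
  have heq : suppF M = suppF S0 := (Finset.eq_of_subset_of_card_le hsub hle).symm
  have hMpos : 0 < M i j := by
    have h0 := hS0.1.1.1 i j
    simp only [hM]; positivity
  have : (i, j) ∈ suppF S0 := heq ▸ (mem_suppF.mpr hMpos)
  exact mem_suppF.mp this
end
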